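/- Let π be a regular multiforcing and let p, q ∈ MT(π) be multitrees that are not somewhere almost disjoint. Then p and q are compatible in MT(π): there exists a multitree r ∈ MT(π) with r ≤ p and r ≤ q. -/

import Mathlib

/-!
Work one coordinate at a time. If `S, T ∈ π(ξ,k)` are not almost disjoint, then `S ∩ T` is an
infinite tree, so by compactness of Cantor space it has a branch `a`. By regularity we may assume
`[S] ∩ [T]` is open in `[S]`, so some cylinder `a↾n` meets `[S]` only inside `[T]`; as every node of
the perfect tree `S` lies on a branch, `S↾(a↾n) ⊆ T`, and `S↾(a↾n) ∈ π(ξ,k)`. On `|p| ∩ |q|` take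
these trees, elsewhere the component of `p` or of `q`.
-/

noncomputable section

/-- Finite binary strings. -/
abbrev Str : Type := List Bool

/-- Points of Cantor space `2^ω`. -/
abbrev Pt : Type := ℕ → Bool

/-- The length-`n` initial segment of a point of Cantor space, as a string. -/
def seg (a : Pt) (n : ℕ) : Str := (List.range n).map a

/-- A tree: a set of strings closed under initial segments. -/
def IsTree (T : Set Str) : Prop := ∀ ⦃s t : Str⦄, s <+: t → t ∈ T → s ∈ T

/-- A perfect tree: a nonempty tree in which every string has two
incomparable extensions inside the tree. -/
def IsPerfectTree (T : Set Str) : Prop :=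
  T.Nonempty ∧ IsTree T ∧
    ∀ s ∈ T, ∃ t₁ t₂, t₁ ∈ T ∧ t₂ ∈ T ∧ s <+: t₁ ∧ s <+: t₂ ∧ ¬ t₁ <+: t₂ ∧ ¬ t₂ <+: t₁

/-- The restriction `T↾s = {t ∈ T : s ⊆ t or t ⊆ s}`. -/
def Tres (T : Set Str) (s : Str) : Set Str := {t ∈ T | s <+: t ∨ t <+: s}

/-- The set `[T]` of branches of a tree `T`. -/
def branches (T : Set Str) : Set Pt := {a | ∀ n, seg a n ∈ T}

/-- `s` is the stem (root) of `T`: the longest `s ∈ T` with `T = T↾s`. -/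
def IsStem (T : Set Str) (s : Str) : Prop :=
  s ∈ T ∧ T = Tres T s ∧ ∀ t ∈ T, T = Tres T t → t <+: s

open Classical in
/-- The stem `root(T)` of a tree (junk value `[]` if there is none). -/
def stem (T : Set Str) : Str := if h : ∃ s, IsStem T s then h.choose else []

/-- Simple splitting `T→i = T↾(root(T)⌢i)`. -/
def splitOne (T : Set Str) (i : Bool) : Set Str := Tres T (stem T ++ [i])

/-- Iterated splitting `T→u`. -/
def splitIter (T : Set Str) (u : Str) : Set Str := u.foldl splitOne T

/-- Almost disjointness of trees: finite intersection. -/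
def AD (S T : Set Str) : Prop := (S ∩ T).Finite

/-- A perfect-tree forcing notion: a nonempty set of perfect trees closed
under restrictions. -/
def IsPTF (P : Set (Set Str)) : Prop :=
  P.Nonempty ∧ (∀ T ∈ P, IsPerfectTree T) ∧ ∀ T ∈ P, ∀ s ∈ T, Tres T s ∈ P

/-- `A` is relatively clopen in `B` (as a subspace of Cantor space). -/
def ClopenIn (A B : Set Pt) : Prop := IsClopen ((fun x : B => (x : Pt)) ⁻¹' A)

/-- `A` is relatively open in `B` (as a subspace of Cantor space). -/
def OpenIn (A B : Set Pt) : Prop := IsOpen ((fun x : B => (x : Pt)) ⁻¹' A)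

/-- A special perfect-tree forcing notion: `P = {T↾s : s ∈ T ∈ A}` for an
antichain (pairwise a.d. set) `A ⊆ P`. -/
def SpecialPTF (P : Set (Set Str)) : Prop :=
  ∃ A ⊆ P, A.Pairwise AD ∧ P = {R | ∃ T ∈ A, ∃ s ∈ T, R = Tres T s}

/-- A regular perfect-tree forcing notion: `[S] ∩ [T]` is relatively clopen
in `[S]` or in `[T]`, for all `S, T ∈ P`. -/
def RegularPTF (P : Set (Set Str)) : Prop :=
  ∀ S ∈ P, ∀ T ∈ P,
    ClopenIn (branches S ∩ branches T) (branches S) ∨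
    ClopenIn (branches S ∩ branches T) (branches T)

/-- `T ⊆ᶠ ⋃ D`: `[T]` is covered by finitely many `[S]`, `S ∈ D`. -/
def SqFin (T : Set Str) (D : Set (Set Str)) : Prop :=
  ∃ D' ⊆ D, D'.Finite ∧ branches T ⊆ ⋃ S ∈ D', branches S

/-- `P ⊑ Q`: `Q` is a refinement of `P`. -/
def Refines (P Q : Set (Set Str)) : Prop :=
  (∀ T ∈ P, ∃ S ∈ Q, S ⊆ T) ∧
  (∀ S ∈ Q, SqFin S P) ∧
  (∀ S ∈ Q, ∀ T ∈ P, ClopenIn (branches S ∩ branches T) (branches S) ∧ ¬ T ⊆ S)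

/-- `D` is dense in `P`. -/
def DenseIn (D P : Set (Set Str)) : Prop := ∀ T ∈ P, ∃ S ∈ D, S ⊆ T

/-- `D` is pre-dense in `P`. -/
def PreDenseIn (D P : Set (Set Str)) : Prop :=
  DenseIn {T ∈ P | ∃ S ∈ D, T ⊆ S} P

/-- `P ⊑_D Q`: `Q` locks `D` over `P`. -/
def Locks (P D Q : Set (Set Str)) : Prop :=
  Refines P Q ∧ ∀ S ∈ Q, SqFin S D

/-- A finite splitting system of height `n` over `P`. -/
def IsFSS (P : Set (Set Str)) (n : ℕ) (φ : Str → Set Str) : Prop :=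
  (∀ s : Str, s.length ≤ n → φ s ∈ P) ∧
  ∀ (s : Str) (i : Bool), s.length < n → φ (s ++ [i]) ⊆ splitOne (φ s) i

/-- The index set `ω₁ × ω`. -/
abbrev Idx : Type 1 := {xi : Ordinal // xi < (Cardinal.aleph 1).ord} × ℕ

/-- A multitree: a map with finite domain `|p| ⊆ ω₁ × ω` whose values are
perfect trees. -/
structure Multitree : Type 1 where
  dom : Set Idx
  fin : dom.Finite
  val : Idx → Set Str
  perf : ∀ i ∈ dom, IsPerfectTree (val i)

/-- Componentwise ordering of multitrees: `q ≤ p`. -/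
def MTle (q p : Multitree) : Prop :=
  p.dom ⊆ q.dom ∧ ∀ i ∈ p.dom, q.val i ⊆ p.val i

/-- Multitrees `p, q` are somewhere almost disjoint. -/
def SomewhereAD (p q : Multitree) : Prop :=
  ∃ i ∈ p.dom ∩ q.dom, AD (p.val i) (q.val i)

/-- A multiforcing: a map on `|π| ⊆ ω₁ × ω` whose values are perfect-tree
forcing notions. -/
structure Multiforcing : Type 1 where
  dom : Set Idx
  val : Idx → Set (Set Str)
  ptf : ∀ i ∈ dom, IsPTF (val i)

/-- A regular multiforcing: each component is regular. -/
def MFRegular (pi : Multiforcing) : Prop := ∀ i ∈ pi.dom, RegularPTF (pi.val i)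

/-- `MT(π)`: the set of multitrees built from `π`. -/
def MT (pi : Multiforcing) : Set Multitree :=
  {p | p.dom ⊆ pi.dom ∧ ∀ i ∈ p.dom, p.val i ∈ pi.val i}

/-- The cofinite-dimensional cube `[p]` determined by a multitree `p`. -/
def mcube (p : Multitree) : Set (Idx → Pt) :=
  {x | ∀ i ∈ p.dom, x i ∈ branches (p.val i)}

open PiNat

lemma seg_length (a : Pt) (n : ℕ) : (seg a n).length = n := by simp [seg]

lemma seg_eq_take {a : Pt} {n m : ℕ} (h : n ≤ m) : seg a n = (seg a m).take n := by
  simp [seg, ← List.map_take, List.take_range, min_eq_left h]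

lemma seg_prefix_seg (a : Pt) {n m : ℕ} (h : n ≤ m) : seg a n <+: seg a m :=
  seg_eq_take h ▸ List.take_prefix _ _

lemma seg_eq_seg_iff {a b : Pt} {n : ℕ} : seg a n = seg b n ↔ b ∈ cylinder a n := by
  simp [seg, List.map_inj_left, mem_cylinder_iff, eq_comm]

lemma seg_getD_eq_take {s : Str} {n : ℕ} (h : n ≤ s.length) :
    seg (fun i => s.getD i false) n = s.take n := by
  apply List.ext_getElem (by simp [seg_length, h])
  intro i hi _
  simp only [seg_length] at hi
  simp [seg, show i < s.length by omega]

lemma eq_of_prefix_of_prefix_of_length_eq {s t u : Str} (hs : s <+: u) (ht : t <+: u)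
    (hlen : s.length = t.length) : s = t :=
  (List.prefix_of_prefix_length_le hs ht hlen.le).eq_of_length hlen

lemma isClopen_setOf_seg_mem (S : Set Str) (n : ℕ) : IsClopen {a : Pt | seg a n ∈ S} := by
  have hopen : ∀ S : Set Str, IsOpen {a : Pt | seg a n ∈ S} := fun S =>
    isOpen_iff_mem_nhds.2 fun a ha => Filter.mem_of_superset
      ((isOpen_cylinder _ a n).mem_nhds (self_mem_cylinder a n))
      fun b hb => by
        show seg b n ∈ S
        rwa [← seg_eq_seg_iff.2 hb]
  exact ⟨isOpen_compl_iff.1 (hopen Sᶜ), hopen S⟩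

lemma IsTree.tres {T : Set Str} (hT : IsTree T) (t : Str) : IsTree (Tres T t) := by
  rintro s u hsu ⟨huT, htu | hut⟩
  · exact ⟨hT hsu huT, List.prefix_or_prefix_of_prefix htu hsu⟩
  · exact ⟨hT hsu huT, .inr (hsu.trans hut)⟩

lemma IsTree.branches_nonempty {T : Set Str} (hT : IsTree T)
    (hlong : ∀ n, ∃ s ∈ T, n ≤ s.length) : (branches T).Nonempty := by
  have hne : ∀ n, {a : Pt | seg a n ∈ T}.Nonempty := fun n => by
    obtain ⟨s, hsT, hns⟩ := hlong n
    exact ⟨_, (seg_getD_eq_take hns).symm ▸ hT (List.take_prefix n s) hsT⟩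
  obtain ⟨a, ha⟩ := IsCompact.nonempty_iInter_of_sequence_nonempty_isCompact_isClosed _
    (fun n a (ha : seg a (n + 1) ∈ T) => hT (seg_prefix_seg a n.le_succ) ha) hne
    (isClopen_setOf_seg_mem T 0).isClosed.isCompact
    (fun n => (isClopen_setOf_seg_mem T n).isClosed)
  exact ⟨a, Set.mem_iInter.1 ha⟩

lemma exists_length_ge_of_infinite {S : Set Str} (hS : S.Infinite) (n : ℕ) :
    ∃ s ∈ S, n ≤ s.length := by
  by_contra! h
  exact hS ((List.finite_length_lt Bool n).subset h)

lemma IsPerfectTree.exists_extension_length_ge {T : Set Str} (hT : IsPerfectTree T) {t : Str}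
    (ht : t ∈ T) (n : ℕ) : ∃ s ∈ T, t <+: s ∧ n ≤ s.length := by
  induction n with
  | zero => exact ⟨t, ht, List.prefix_refl t, Nat.zero_le _⟩
  | succ n ih =>
    obtain ⟨s, hsT, hts, hns⟩ := ih
    obtain ⟨u₁, u₂, hu₁, -, hsu₁, hsu₂, hu₁u₂, -⟩ := hT.2.2 s hsT
    have hlen : s.length < u₁.length := by
      by_contra! hle
      exact hu₁u₂ (hsu₁.eq_of_length (le_antisymm hsu₁.length_le hle) ▸ hsu₂)
    exact ⟨u₁, hu₁, hts.trans hsu₁, by omega⟩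

lemma IsPerfectTree.exists_branch_seg_eq {T : Set Str} (hT : IsPerfectTree T) {t : Str}
    (ht : t ∈ T) : ∃ a ∈ branches T, seg a t.length = t := by
  obtain ⟨a, ha⟩ := (hT.2.1.tres t).branches_nonempty fun n => by
    obtain ⟨s, hsT, hts, hns⟩ := hT.exists_extension_length_ge ht n
    exact ⟨s, ⟨hsT, .inl hts⟩, hns⟩
  refine ⟨a, fun n => (ha n).1, ?_⟩
  rcases (ha t.length).2 with h | h
  · exact (h.eq_of_length (seg_length a _).symm).symm
  · exact h.eq_of_length (seg_length a _)

lemma OpenIn.exists_cylinder_subset {A B : Set Pt} (hAB : OpenIn A B) {a : Pt} (haA : a ∈ A)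
    (haB : a ∈ B) : ∃ n, ∀ b ∈ B, b ∈ cylinder a n → b ∈ A := by
  obtain ⟨U, hU, hUA⟩ := isOpen_induced_iff.1 hAB
  have haU : a ∈ U := by
    have : (⟨a, haB⟩ : B) ∈ (fun x : B => (x : Pt)) ⁻¹' U := hUA ▸ haA
    exact this
  obtain ⟨_, ⟨x, n, rfl⟩, hax, hxU⟩ :=
    (isTopologicalBasis_cylinders _).exists_subset_of_mem_open haU hU
  refine ⟨n, fun b hbB hb => ?_⟩
  have : (⟨b, hbB⟩ : B) ∈ (fun x : B => (x : Pt)) ⁻¹' U := hxU (mem_cylinder_iff_eq.1 hax ▸ hb)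
  rwa [hUA] at this

lemma exists_tres_subset_of_openIn {S T : Set Str} (hS : IsPerfectTree S) (hT : IsTree T)
    (hST : ¬ AD S T) (hopen : OpenIn (branches S ∩ branches T) (branches S)) :
    ∃ s ∈ S, Tres S s ⊆ T := by
  have hinter : IsTree (S ∩ T) := fun s t hst ht => ⟨hS.2.1 hst ht.1, hT hst ht.2⟩
  obtain ⟨a, ha⟩ := hinter.branches_nonempty (exists_length_ge_of_infinite hST)
  obtain ⟨n, hn⟩ := hopen.exists_cylinder_subset ⟨fun k => (ha k).1, fun k => (ha k).2⟩
    fun k => (ha k).1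
  refine ⟨seg a n, (ha n).1, ?_⟩
  rintro t ⟨htS, hat | hta⟩
  · obtain ⟨b, hbS, hbt⟩ := hS.exists_branch_seg_eq htS
    have hlen : n ≤ t.length := seg_length a n ▸ hat.length_le
    have hab : seg a n = seg b n := eq_of_prefix_of_prefix_of_length_eq hat
      (hbt ▸ seg_prefix_seg b hlen) (by simp only [seg_length])
    exact hbt ▸ (hn b hbS (seg_eq_seg_iff.1 hab)).2 t.length
  · exact hT hta (ha n).2

lemma RegularPTF.exists_subset_subset_of_not_AD {P : Set (Set Str)} (hreg : RegularPTF P)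
    (hP : IsPTF P) {S T : Set Str} (hS : S ∈ P) (hT : T ∈ P) (hST : ¬ AD S T) :
    ∃ R ∈ P, R ⊆ S ∧ R ⊆ T := by
  obtain ⟨-, hperf, hres⟩ := hP
  rcases hreg S hS T hT with hclopen | hclopen
  · obtain ⟨s, hs, hsub⟩ :=
      exists_tres_subset_of_openIn (hperf S hS) (hperf T hT).2.1 hST hclopen.isOpen
    exact ⟨Tres S s, hres S hS s hs, fun _ h => h.1, hsub⟩
  · rw [Set.inter_comm] at hclopen
    obtain ⟨s, hs, hsub⟩ := exists_tres_subset_of_openIn (hperf T hT) (hperf S hS).2.1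
      (by rwa [AD, Set.inter_comm]) hclopen.isOpen
    exact ⟨Tres T s, hres T hT s hs, hsub, fun _ h => h.1⟩

lemma exists_MTle_MTle_of_forall_mem_inter {pi : Multiforcing} {p q : Multitree}
    (hp : p ∈ MT pi) (hq : q ∈ MT pi)
    (h : ∀ i ∈ p.dom ∩ q.dom, ∃ R ∈ pi.val i, R ⊆ p.val i ∧ R ⊆ q.val i) :
    ∃ r ∈ MT pi, MTle r p ∧ MTle r q := by
  have hlower : ∀ i ∈ p.dom ∪ q.dom,
      ∃ R ∈ pi.val i, (i ∈ p.dom → R ⊆ p.val i) ∧ (i ∈ q.dom → R ⊆ q.val i) := by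
    rintro i (hip | hiq)
    · by_cases hiq : i ∈ q.dom
      · obtain ⟨R, hR, hRp, hRq⟩ := h i ⟨hip, hiq⟩
        exact ⟨R, hR, fun _ => hRp, fun _ => hRq⟩
      · exact ⟨p.val i, hp.2 i hip, fun _ => subset_rfl, fun hiq' => absurd hiq' hiq⟩
    · by_cases hip : i ∈ p.dom
      · obtain ⟨R, hR, hRp, hRq⟩ := h i ⟨hip, hiq⟩
        exact ⟨R, hR, fun _ => hRp, fun _ => hRq⟩
      · exact ⟨q.val i, hq.2 i hiq, fun hip' => absurd hip' hip, fun _ => subset_rfl⟩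
  choose! R hR hRp hRq using hlower
  have hdom : p.dom ∪ q.dom ⊆ pi.dom := Set.union_subset hp.1 hq.1
  let r : Multitree :=
    ⟨p.dom ∪ q.dom, p.fin.union q.fin, R, fun i hi => (pi.ptf i (hdom hi)).2.1 _ (hR i hi)⟩
  exact ⟨r, ⟨hdom, hR⟩, ⟨Set.subset_union_left, fun i hi => hRp i (.inl hi) hi⟩,
    ⟨Set.subset_union_right, fun i hi => hRq i (.inr hi) hi⟩⟩

/-- Corollary 2.14 (sad): in a regular multiforcing, multitrees that are not
somewhere almost disjoint are compatible in `MT(π)`. -/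
theorem stmt18 (pi : Multiforcing) (hreg : MFRegular pi)
    (p q : Multitree) (hp : p ∈ MT pi) (hq : q ∈ MT pi)
    (h : ¬ SomewhereAD p q) :
    ∃ r ∈ MT pi, MTle r p ∧ MTle r q :=
  exists_MTle_MTle_of_forall_mem_inter hp hq fun i hi =>
    (hreg i (hp.1 hi.1)).exists_subset_subset_of_not_AD (pi.ptf i (hp.1 hi.1)) (hp.2 i hi.1)
      (hq.2 i hi.2) fun hAD => h ⟨i, hi, hAD⟩

end
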